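/- If a Skolem sequence of order n exists (as a partition of {1,...,2n} into pairs (a_i,b_i) with b_i - a_i = i for 1 ≤ i ≤ n), then n ≡ 0 or 1 (mod 4). -/
import Mathlib


/-- A Skolem sequence of order `n` in pair form: a partition of `{1,...,2n}` into
pairs `(a i, b i)`, `1 ≤ i ≤ n`, with `b i - a i = i`. -/
def IsSkolem (n : ℕ) (a b : ℕ → ℕ) : Prop :=
  (∀ i, 1 ≤ i → i ≤ n → a i + i = b i) ∧
  (∀ x, (1 ≤ x ∧ x ≤ 2 * n) ↔ ∃ i, 1 ≤ i ∧ i ≤ n ∧ (x = a i ∨ x = b i)) ∧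
  (∀ i j, 1 ≤ i → i ≤ n → 1 ≤ j → j ≤ n → i ≠ j →
    a i ≠ a j ∧ a i ≠ b j ∧ b i ≠ a j ∧ b i ≠ b j)

lemma gauss_icc (m : ℕ) : (∑ i ∈ Finset.Icc 1 m, i) * 2 = m * (m + 1) := by
  induction m with
  | zero => simp
  | succ k ih =>
    rw [Finset.sum_Icc_succ_top (by omega)]
    ring_nf
    ring_nf at ih
    omega

/-- If a Skolem sequence of order `n` exists then `n ≡ 0, 1 (mod 4)`. -/
theorem skolem_necessary (n : ℕ) (a b : ℕ → ℕ) (h : IsSkolem n a b) :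
    n % 4 = 0 ∨ n % 4 = 1 := by
  obtain ⟨hab, hcover, hdisj⟩ := h
  -- the interval {1,...,2n} is the disjoint union of the pairs
  have hset : Finset.Icc 1 (2 * n) =
      (Finset.Icc 1 n).biUnion (fun i => {a i, b i}) := by
    ext x
    simp only [Finset.mem_Icc, Finset.mem_biUnion, Finset.mem_insert,
      Finset.mem_singleton]
    constructor
    · intro hx
      obtain ⟨i, h1, h2, h3⟩ := (hcover x).1 hx
      exact ⟨i, ⟨h1, h2⟩, h3⟩
    · rintro ⟨i, hi, hx⟩
      exact (hcover x).2 ⟨i, hi.1, hi.2, hx⟩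
  have hpd : (↑(Finset.Icc 1 n) : Set ℕ).PairwiseDisjoint
      (fun i => ({a i, b i} : Finset ℕ)) := by
    intro i hi j hj hij
    simp only [Finset.coe_Icc, Set.mem_Icc] at hi hj
    obtain ⟨h1, h2, h3, h4⟩ := hdisj i j hi.1 hi.2 hj.1 hj.2 hij
    refine Finset.disjoint_left.2 ?_
    intro x hx hx'
    simp only [Finset.mem_insert, Finset.mem_singleton] at hx hx'
    rcases hx with rfl | rfl <;> rcases hx' with e | e <;> omega
  have hne : ∀ i, 1 ≤ i → i ≤ n → a i ≠ b i := by
    intro i h1 h2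
    have := hab i h1 h2
    omega
  have hsum : ∑ x ∈ Finset.Icc 1 (2 * n), x =
      ∑ i ∈ Finset.Icc 1 n, (a i + b i) := by
    rw [hset, Finset.sum_biUnion hpd]
    refine Finset.sum_congr rfl ?_
    intro i hi
    rw [Finset.mem_Icc] at hi
    rw [Finset.sum_pair (hne i hi.1 hi.2)]
  have hsum2 : ∑ i ∈ Finset.Icc 1 n, (a i + b i) =
      2 * (∑ i ∈ Finset.Icc 1 n, a i) + ∑ i ∈ Finset.Icc 1 n, i := by
    rw [Finset.mul_sum, ← Finset.sum_add_distrib]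
    refine Finset.sum_congr rfl ?_
    intro i hi
    rw [Finset.mem_Icc] at hi
    have := hab i hi.1 hi.2
    omega
  have g1 := gauss_icc (2 * n)
  have g2 := gauss_icc n
  set S := ∑ i ∈ Finset.Icc 1 n, a i with hS
  -- 3n² + n = 4S
  have key : 3 * n ^ 2 + n = 4 * S := by nlinarith [hsum, hsum2, g1, g2]
  have hcong : (3 * n ^ 2 + n) % 4 = (3 * (n % 4) ^ 2 + n % 4) % 4 := by
    have h4 : n % 4 ≡ n [MOD 4] := Nat.mod_modEq n 4
    exact (Nat.ModEq.add ((h4.pow 2).mul_left 3) h4).symm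
  have key2 : (3 * (n % 4) ^ 2 + n % 4) % 4 = 0 := by
    rw [← hcong, key]
    omega
  have hr : n % 4 = 0 ∨ n % 4 = 1 ∨ n % 4 = 2 ∨ n % 4 = 3 := by omega
  rcases hr with h0 | h0 | h0 | h0
  · exact Or.inl h0
  · exact Or.inr h0
  · rw [h0] at key2; norm_num at key2
  · rw [h0] at key2; norm_num at key2
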